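/- arXiv:1501.06098 — 7 statements merged into one kernel-verified Lean document; each statement's English description precedes it below -/
import Mathlib

section
/- Let δ, σ, M, E, a, c be positive integers with gcd(δ,σ) = 1, δ < σ, and suppose E² = (σ⁴ − δ⁴)·M² + δ⁴, 2δ²·a = (σ² − δ²)·M + δ² + E, and 2δ³·c = σ·M·(σ²·M + E). Then S(M,a) = c². -/
/-- `S M a` is the sum of `M` consecutive cubes starting at `a`. -/
def S (M : ℕ) (a : ℤ) : ℤ := ∑ i ∈ Finset.range M, (a + i) ^ 3

lemma S_formula (M : ℕ) (a : ℤ) :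
    8 * S M a = (M : ℤ) * (2 * a + M - 1) * ((2 * a + M - 1) ^ 2 + (M : ℤ) ^ 2 - 1) := by
  induction M with
  | zero => simp [S]
  | succ n ih =>
    rw [S, Finset.sum_range_succ, ← S] at *
    push_cast
    push_cast at ih
    ring_nf
    ring_nf at ih
    linarith

/-- If `δ, σ, M, E, a, c` are positive integers with `gcd(δ,σ) = 1`, `δ < σ`,
`E² = (σ⁴ − δ⁴)M² + δ⁴`, `2δ²a = (σ² − δ²)M + δ² + E` and `2δ³c = σM(σ²M + E)`,
then the sum of `M` consecutive cubes starting at `a` is `c²`. -/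
theorem sum_consecutive_cubes_eq_sq (δ σ E a c : ℤ) (M : ℕ)
    (hδ : 0 < δ) (hσ : 0 < σ) (hM : 0 < M) (hE : 0 < E) (ha : 0 < a) (hc : 0 < c)
    (hgcd : Int.gcd δ σ = 1) (hlt : δ < σ)
    (h1 : E ^ 2 = (σ ^ 4 - δ ^ 4) * (M : ℤ) ^ 2 + δ ^ 4)
    (h2 : 2 * δ ^ 2 * a = (σ ^ 2 - δ ^ 2) * M + δ ^ 2 + E)
    (h3 : 2 * δ ^ 3 * c = σ * M * (σ ^ 2 * M + E)) :
    S M a = c ^ 2 := by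
  have hf := S_formula M a
  have hδ6 : (δ : ℤ) ^ 6 ≠ 0 := pow_ne_zero _ (ne_of_gt hδ)
  have key : δ ^ 6 * (8 * S M a) = δ ^ 6 * (8 * c ^ 2) := by
    linear_combination (δ ^ 6) * hf
      + ((M : ℤ) * δ ^ 2 * (2 * a + M - 1)) * h1
      + ((M : ℤ) * (3 * (σ ^ 2 * M + E) ^ 2
          + 3 * (σ ^ 2 * M + E) * (2 * δ ^ 2 * a - ((σ ^ 2 - δ ^ 2) * M + δ ^ 2 + E))
          + (2 * δ ^ 2 * a - ((σ ^ 2 - δ ^ 2) * M + δ ^ 2 + E)) ^ 2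
          + σ ^ 4 * M ^ 2 - E ^ 2)) * h2
      - (4 * δ ^ 3 * c + 2 * σ * M * (σ ^ 2 * M + E)) * h3
  have := mul_left_cancel₀ hδ6 key
  linarith
end

section
/- For every positive integer k, setting M = 2k+1, a = (2k+1)³ − (3k+1), and c = 2k(k+1)(2k+1)(8k(k+1)+1), one has S(M,a) = c²; moreover a = M³ − (3M−1)/2 and c = M(M²−1)(2M²−1)/2. In particular, for every odd M > 1 there is at least one pair (a,c) of positive integers with a > 1 and S(M,a) = c². -/
lemma S_closed (M : ℕ) (a : ℤ) :
    4 * S M a = 4 * (M : ℤ) * a ^ 3 + 6 * a ^ 2 * M * (M - 1)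
      + 2 * a * M * (M - 1) * (2 * M - 1) + (M : ℤ) ^ 2 * (M - 1) ^ 2 := by
  induction M with
  | zero => simp [S]
  | succ n ih =>
    have h : S (n + 1) a = S n a + (a + n) ^ 3 := by
      simp [S, Finset.sum_range_succ]
    rw [h]
    push_cast at ih ⊢
    linear_combination ih

lemma S_key (k : ℕ) :
    S (2 * k + 1) ((2 * (k : ℤ) + 1) ^ 3 - (3 * k + 1)) =
      (2 * k * ((k : ℤ) + 1) * (2 * k + 1) * (8 * k * (k + 1) + 1)) ^ 2 := by
  have h := S_closed (2 * k + 1) ((2 * (k : ℤ) + 1) ^ 3 - (3 * k + 1))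
  push_cast at h
  have h2 : (4 : ℤ) * ((2 * k * ((k : ℤ) + 1) * (2 * k + 1) * (8 * k * (k + 1) + 1)) ^ 2)
      = 4 * (2 * (k : ℤ) + 1) * ((2 * (k : ℤ) + 1) ^ 3 - (3 * k + 1)) ^ 3
        + 6 * ((2 * (k : ℤ) + 1) ^ 3 - (3 * k + 1)) ^ 2 * (2 * k + 1) * (2 * k + 1 - 1)
        + 2 * ((2 * (k : ℤ) + 1) ^ 3 - (3 * k + 1)) * (2 * k + 1) * (2 * k + 1 - 1)
          * (2 * (2 * k + 1) - 1)
        + ((2 : ℤ) * k + 1) ^ 2 * (2 * k + 1 - 1) ^ 2 := by ring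
  linarith

/-- For every positive integer `k`, with `M = 2k+1`, `a = (2k+1)³ − (3k+1)` and
`c = 2k(k+1)(2k+1)(8k(k+1)+1)` one has `S(M,a) = c²`, and moreover
`a = M³ − (3M−1)/2` and `c = M(M²−1)(2M²−1)/2` (the divisions being exact).
In particular, every odd `M > 1` admits a pair `(a,c)` with `a > 1` and `S(M,a) = c²`. -/
theorem odd_M_solutions :
    (∀ k : ℕ, 0 < k → ∀ (M : ℕ) (a c : ℤ),
      M = 2 * k + 1 →
      a = (2 * (k : ℤ) + 1) ^ 3 - (3 * k + 1) →
      c = 2 * k * ((k : ℤ) + 1) * (2 * k + 1) * (8 * k * (k + 1) + 1) →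
      S M a = c ^ 2 ∧
        a = (M : ℤ) ^ 3 - (3 * (M : ℤ) - 1) / 2 ∧
        c = (M : ℤ) * ((M : ℤ) ^ 2 - 1) * (2 * (M : ℤ) ^ 2 - 1) / 2) ∧
    (∀ M : ℕ, 1 < M → Odd M → ∃ a c : ℤ, 1 < a ∧ 0 < c ∧ S M a = c ^ 2) := by
  constructor
  · intro k hk M a c hM ha hc
    subst hM ha hc
    refine ⟨S_key k, ?_, ?_⟩
    · have : (3 * ((2 * k + 1 : ℕ) : ℤ) - 1) / 2 = 3 * k + 1 := by push_cast; omega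
      rw [this]; push_cast; ring
    · have h2 : ((2 * k + 1 : ℕ) : ℤ) * (((2 * k + 1 : ℕ) : ℤ) ^ 2 - 1)
          * (2 * ((2 * k + 1 : ℕ) : ℤ) ^ 2 - 1)
          = 2 * (2 * k * ((k : ℤ) + 1) * (2 * k + 1) * (8 * k * (k + 1) + 1)) := by
        push_cast; ring
      rw [h2, Int.mul_ediv_cancel_left _ two_ne_zero]
  · intro M hM hodd
    obtain ⟨k, hk⟩ := hodd
    have hk1 : 1 ≤ k := by omega
    refine ⟨(2 * (k : ℤ) + 1) ^ 3 - (3 * k + 1),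
      2 * k * ((k : ℤ) + 1) * (2 * k + 1) * (8 * k * (k + 1) + 1), ?_, ?_, ?_⟩
    · have : (1 : ℤ) ≤ (k : ℤ) := by exact_mod_cast hk1
      nlinarith [mul_le_mul this this (by linarith : (0:ℤ) ≤ 1) (by linarith : (0:ℤ) ≤ (k:ℤ)), sq_nonneg ((k:ℤ))]
    · have : (1 : ℤ) ≤ (k : ℤ) := by exact_mod_cast hk1
      positivity
    · have : M = 2 * k + 1 := by omega
      rw [this]; exact S_key k
end

section
/- For all positive integers k and n, let t = (2k+1)², δ = U_n(t) − U_{n−1}(t), and M = k·δ. Then δ is odd, k(k+1)·U_{2n}(t) is even, and setting a = (δ+1)/2 and c = k(k+1)·U_{2n}(t)/2, one has S(M,a) = c². -/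
/-- `U n x` is the `n`-th Chebyshev polynomial of the second kind evaluated at `x`. -/
noncomputable def U (n : ℤ) (x : ℤ) : ℤ := (Polynomial.Chebyshev.U ℤ n).eval x

lemma U_rec (x : ℤ) (m : ℤ) : U (m + 2) x = 2 * x * U (m + 1) x - U m x := by
  simp [U, Polynomial.Chebyshev.U_add_two]

lemma U_zero' (x : ℤ) : U 0 x = 1 := by simp [U]

lemma U_neg_one' (x : ℤ) : U (-1) x = 0 := by simp [U, Polynomial.Chebyshev.U_neg_one]

lemma U_one' (x : ℤ) : U 1 x = 2 * x := by simp [U, Polynomial.Chebyshev.U_one]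

lemma U_rec' (x : ℤ) (m : ℤ) : U (m + 1) x = 2 * x * U m x - U (m - 1) x := by
  have := U_rec x (m - 1)
  have e1 : m - 1 + 2 = m + 1 := by ring
  have e2 : m - 1 + 1 = m := by ring
  rw [e1, e2] at this
  exact this

/-- Pell-type identity. -/
lemma pell (x : ℤ) (n : ℕ) :
    U n x ^ 2 + U ((n : ℤ) - 1) x ^ 2 - 2 * x * U n x * U ((n : ℤ) - 1) x = 1 := by
  induction n with
  | zero => simp [U_zero', U_neg_one']
  | succ m ih =>
      have hrec := U_rec' x m
      push_cast
      have h1 : ((m : ℤ) + 1 - 1) = (m : ℤ) := by ring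
      rw [h1, hrec]
      nlinarith [ih]

/-- Double-index formulas, proved jointly. -/
lemma U_double (x : ℤ) (n : ℕ) :
    U (2 * n) x = U n x ^ 2 - U ((n : ℤ) - 1) x ^ 2 ∧
      U (2 * n + 1) x = U n x * (U ((n : ℤ) + 1) x - U ((n : ℤ) - 1) x) := by
  induction n with
  | zero => simp [U_zero', U_neg_one', U_one']
  | succ m ih =>
      obtain ⟨hA, hB⟩ := ih
      have r1 : U ((m : ℤ) + 1) x = 2 * x * U m x - U ((m : ℤ) - 1) x := U_rec' x m
      have r2 : U ((m : ℤ) + 2) x = 2 * x * U ((m : ℤ) + 1) x - U m x := U_rec x m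
      have h2n2 : U (2 * (m : ℤ) + 2) x = 2 * x * U (2 * m + 1) x - U (2 * m) x := by
        have := U_rec x (2 * (m : ℤ))
        rw [show (2 * (m : ℤ) + 1) = 2 * m + 1 from rfl] at this
        exact this
      have h2n3 : U (2 * (m : ℤ) + 3) x = 2 * x * U (2 * m + 2) x - U (2 * m + 1) x := by
        have := U_rec x (2 * (m : ℤ) + 1)
        rw [show (2 * (m : ℤ) + 1 + 2) = 2 * m + 3 by ring,
            show (2 * (m : ℤ) + 1 + 1) = 2 * m + 2 by ring] at this
        exact this
      have hA' : U (2 * (m : ℤ) + 2) x = U ((m : ℤ) + 1) x ^ 2 - U m x ^ 2 := by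
        rw [h2n2, hA, hB, r1]; ring
      constructor
      · push_cast
        rw [show (2 * ((m : ℤ) + 1)) = 2 * m + 2 by ring,
            show ((m : ℤ) + 1 - 1) = (m : ℤ) by ring]
        exact hA'
      · push_cast
        rw [show (2 * ((m : ℤ) + 1) + 1) = 2 * m + 3 by ring, h2n3, hA', hB,
            show ((m : ℤ) + 1 - 1) = (m : ℤ) by ring,
            show ((m : ℤ) + 1 + 1) = (m : ℤ) + 2 by ring, r2, r1]
        ring

lemma cube_sum (M : ℕ) (a : ℤ) :
    4 * S M a = ((a + M - 1) * (a + M)) ^ 2 - ((a - 1) * a) ^ 2 := by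
  induction M with
  | zero => simp [S]
  | succ m ih =>
      have h : S (m + 1) a = S m a + (a + m) ^ 3 := by
        simp [S, Finset.sum_range_succ]
      rw [h]
      push_cast
      push_cast at ih
      nlinarith [ih]

/-- For positive integers `k`, `n`, with `t = (2k+1)²`, `δ = U_n(t) − U_{n−1}(t)` and
`M = k·δ`: `δ` is odd, `k(k+1)·U_{2n}(t)` is even, and with `a = (δ+1)/2` and
`c = k(k+1)·U_{2n}(t)/2` one has `S(M,a) = c²`. -/
theorem M_eq_k_delta_solutions (k n : ℕ) (hk : 0 < k) (hn : 0 < n)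
    (t δ : ℤ) (ht : t = (2 * (k : ℤ) + 1) ^ 2)
    (hδ : δ = U n t - U ((n : ℤ) - 1) t) :
    Odd δ ∧ Even ((k : ℤ) * ((k : ℤ) + 1) * U (2 * n) t) ∧
      ∀ M : ℕ, (M : ℤ) = (k : ℤ) * δ →
        S M ((δ + 1) / 2) = ((k : ℤ) * ((k : ℤ) + 1) * U (2 * n) t / 2) ^ 2 := by
  set u := U n t with hu
  set v := U ((n : ℤ) - 1) t with hv
  have hpell : u ^ 2 + v ^ 2 - 2 * t * u * v = 1 := pell t n
  have hdsq : δ ^ 2 = 1 + 2 * (t - 1) * u * v := by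
    rw [hδ]; linear_combination hpell
  have hoddsq : Odd (δ ^ 2) := ⟨(t - 1) * u * v, by rw [hdsq]; ring⟩
  have hodd : Odd δ := by
    rcases Int.even_or_odd δ with h | h
    · exact absurd hoddsq (by
        have : Even (δ ^ 2) := by rw [sq]; exact h.mul_left δ
        exact Int.not_odd_iff_even.mpr this)
    · exact h
  have hU2n : U (2 * n) t = (u - v) * (u + v) := by
    have := (U_double t n).1
    rw [this]; ring
  have heven : Even ((k : ℤ) * ((k : ℤ) + 1) * U (2 * n) t) :=
    (Int.even_mul_succ_self k).mul_right _
  refine ⟨hodd, heven, ?_⟩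
  intro M hM
  have ha : 2 * ((δ + 1) / 2) = δ + 1 := by
    obtain ⟨r, hr⟩ := hodd
    omega
  have hc : 2 * ((k : ℤ) * ((k : ℤ) + 1) * U (2 * n) t / 2)
      = (k : ℤ) * ((k : ℤ) + 1) * U (2 * n) t :=
    Int.two_mul_ediv_two_of_even heven
  set a := (δ + 1) / 2 with ha'
  set c := (k : ℤ) * ((k : ℤ) + 1) * U (2 * n) t / 2 with hc'
  have h2c : 2 * c = (k : ℤ) * ((k : ℤ) + 1) * ((u - v) * (u + v)) := by
    rw [hc, hU2n]
  have hσ : (u + v) ^ 2 = 1 + 2 * (t + 1) * u * v := by linear_combination hpell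
  have hδσ : (t + 1) * δ ^ 2 - 2 = (t - 1) * (u + v) ^ 2 := by
    linear_combination (t + 1) * hdsq - (t - 1) * hσ
  have hδ2 : δ = 2 * a - 1 := by linarith
  have key : 64 * S M a = 64 * c ^ 2 := by
    calc 64 * S M a
        = ((2*a + 2*(M:ℤ) - 2) * (2*a + 2*(M:ℤ))) ^ 2 - ((2*a - 2) * (2*a)) ^ 2 := by
          linear_combination 16 * cube_sum M a
      _ = ((2*(k:ℤ)+1)^2 * δ^2 - 1) ^ 2 - (δ^2 - 1) ^ 2 := by
          rw [hM, hδ2]; ring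
      _ = (t - 1) * δ^2 * ((t + 1) * δ^2 - 2) := by rw [ht]; ring
      _ = (t - 1) * δ^2 * ((t - 1) * (u + v)^2) := by rw [hδσ]
      _ = 16 * ((k:ℤ) * ((k:ℤ)+1) * ((u - v) * (u + v))) ^ 2 := by
          rw [ht, hδ]; ring
      _ = 16 * (2 * c) ^ 2 := by rw [h2c]
      _ = 64 * c ^ 2 := by ring
  linarith [key]
end

section
/- For all positive integers k and n, let t = (2k+1)², δ_n = U_n(t) − U_{n−1}(t), and σ_n = U_n(t) + U_{n−1}(t). Then (2k(k+1)+1)·δ_n² − 2k(k+1)·σ_n² = 1; that is, (δ_n, σ_n) solves the generalized Pell equation (2k(k+1)+1)X² − 2k(k+1)Y² = 1. -/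
lemma U_pell (t : ℤ) : ∀ m : ℕ,
    U m t ^ 2 - 2 * t * U m t * U ((m : ℤ) - 1) t + U ((m : ℤ) - 1) t ^ 2 = 1 := by
  intro m
  induction m with
  | zero => simp [U, Polynomial.Chebyshev.U_zero, Polynomial.Chebyshev.U_neg_one]
  | succ n ih =>
    have hrec : U ((n : ℤ) + 1) t = 2 * t * U n t - U ((n : ℤ) - 1) t := by
      simp [U, Polynomial.Chebyshev.U_add_one]
    push_cast
    rw [add_sub_cancel_right, hrec]
    nlinarith [ih]

/-- For positive integers `k`, `n`, with `t = (2k+1)²`, the pair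
`(δₙ, σₙ) = (U_n(t) − U_{n−1}(t), U_n(t) + U_{n−1}(t))` solves the generalized Pell
equation `(2k(k+1)+1)X² − 2k(k+1)Y² = 1`. -/
theorem delta_sigma_pell (k n : ℕ) (hk : 0 < k) (hn : 0 < n)
    (t δ σ : ℤ) (ht : t = (2 * (k : ℤ) + 1) ^ 2)
    (hδ : δ = U n t - U ((n : ℤ) - 1) t)
    (hσ : σ = U n t + U ((n : ℤ) - 1) t) :
    (2 * (k : ℤ) * ((k : ℤ) + 1) + 1) * δ ^ 2 - 2 * (k : ℤ) * ((k : ℤ) + 1) * σ ^ 2 = 1 := by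
  have h := U_pell t n
  subst hδ hσ ht
  nlinarith [h]
end

section
/- Let κ, M, C be positive rational numbers with κ > 1 and C² = M²(κ⁴ − 1) + 1. Define M′ = κ²M + C, C′ = κ²M′ − M, a = (M(κ²−1) + 1 + C)/2, a′ = (M′(κ²−1) + 1 + C′)/2, c = κM(κ²M + C)/2, and c′ = κM′(κ²M′ + C′)/2. Then the following seven relations hold: (1) M′ = M + 2a − 1; (2) C′² = M′²(κ⁴−1) + 1; (3) M = (2κ² − 1)M′ − 2a′ + 1; (4) a′ + a = κ²M′ − M + 1; (5) a′ − a = (κ² − 1)M′; (6) c = κMM′/2; (7) c′ + c = κ³M′². -/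
/-- Recurrence relations satisfied by a "recurrent pair" `(M,a,c)`, `(M′,a′,c′)` of
consecutive solutions, with all quantities positive rationals, `κ > 1` and
`C² = M²(κ⁴ − 1) + 1`. -/
theorem recurrent_pair_relations (κ M C : ℚ) (hκpos : 0 < κ) (hMpos : 0 < M) (hCpos : 0 < C)
    (hκ : 1 < κ) (hC : C ^ 2 = M ^ 2 * (κ ^ 4 - 1) + 1)
    (M' C' a a' c c' : ℚ)
    (hM' : M' = κ ^ 2 * M + C)
    (hC' : C' = κ ^ 2 * M' - M)
    (ha : a = (M * (κ ^ 2 - 1) + 1 + C) / 2)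
    (ha' : a' = (M' * (κ ^ 2 - 1) + 1 + C') / 2)
    (hc : c = κ * M * (κ ^ 2 * M + C) / 2)
    (hc' : c' = κ * M' * (κ ^ 2 * M' + C') / 2) :
    M' = M + 2 * a - 1 ∧
    C' ^ 2 = M' ^ 2 * (κ ^ 4 - 1) + 1 ∧
    M = (2 * κ ^ 2 - 1) * M' - 2 * a' + 1 ∧
    a' + a = κ ^ 2 * M' - M + 1 ∧
    a' - a = (κ ^ 2 - 1) * M' ∧
    c = κ * M * M' / 2 ∧
    c' + c = κ ^ 3 * M' ^ 2 := by
  subst hM' hC' ha ha' hc hc'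
  refine ⟨by ring, by linear_combination hC, by ring, by ring, by ring, by ring, by ring⟩
end

section
/- Let δ, σ be positive integers with gcd(δ,σ) = 1 and δ < σ, set D = σ⁴ − δ⁴, and let x, y be positive integers with x² − D·y² = 1. For a positive integer n, set M = σ²·y·U_{n−1}(x) − T_n(x). If M is a positive integer and a, c are positive integers with 2a = T_n(x) − (σ²−δ²)·y·U_{n−1}(x) + 1 and 2c = σ·δ·y·U_{n−1}(x)·( σ²·y·U_{n−1}(x) − T_n(x) ), then S(M,a) = c². (This is the solution family arising from the fundamental solution (X₁,Y₁) = (σ²,−1).) -/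
/-- `T n x` is the `n`-th Chebyshev polynomial of the first kind evaluated at `x`. -/
noncomputable def T (n : ℤ) (x : ℤ) : ℤ := (Polynomial.Chebyshev.T ℤ n).eval x

namespace Polynomial.Chebyshev

variable (R : Type*) [CommRing R]

theorem U_sq_add_U_sq (n : ℤ) :
    U R n ^ 2 + U R (n + 1) ^ 2 - 2 * X * U R n * U R (n + 1) = 1 := by
  have h := congrArg (·.comp (2 * X)) (S_sq_add_S_sq R n)
  simp only [sub_comp, add_comp, mul_comp, pow_comp, X_comp, one_comp, S_comp_two_mul_X] at h
  linear_combination h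

theorem T_sq_sub_mul_U_sq (n : ℤ) : T R n ^ 2 - (X ^ 2 - 1) * U R (n - 1) ^ 2 = 1 := by
  have h := U_sq_add_U_sq R (n - 1)
  rw [sub_add_cancel] at h
  rw [T_eq_U_sub_X_mul_U]
  linear_combination h

end Polynomial.Chebyshev

theorem eight_mul_S (M : ℕ) (a : ℤ) :
    8 * S M a = M * (2 * a + M - 1) * ((2 * a + M - 1) ^ 2 + M ^ 2 - 1) := by
  induction M with
  | zero => simp [S]
  | succ m ih =>
    rw [S, Finset.sum_range_succ, mul_add, ← S, ih]
    push_cast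
    ring

theorem S_eq_sq_of_pell {P u σ δ a c : ℤ} {M : ℕ}
    (hPell : P ^ 2 - (σ ^ 4 - δ ^ 4) * u ^ 2 = 1) (hM : (M : ℤ) = σ ^ 2 * u - P)
    (ha : 2 * a = P - (σ ^ 2 - δ ^ 2) * u + 1) (hc : 2 * c = σ * δ * u * M) :
    S M a = c ^ 2 := by
  have hs : 2 * a + M - 1 = δ ^ 2 * u := by linear_combination ha + hM
  have hsum : (δ ^ 2 * u) ^ 2 + M ^ 2 - 1 = 2 * σ ^ 2 * u * M := by
    rw [hM]; linear_combination hPell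
  have h8 : 8 * S M a = 8 * c ^ 2 := calc
    8 * S M a = 2 * (σ * δ * u * M) ^ 2 := by rw [eight_mul_S, hs, hsum]; ring
    _ = 8 * c ^ 2 := by rw [← hc]; ring
  linarith

theorem solutions_from_sigma_sq_neg_one_general (δ σ x y : ℤ)
    (hPell : x ^ 2 - (σ ^ 4 - δ ^ 4) * y ^ 2 = 1)
    (n : ℤ)
    (M : ℕ) (hM : (M : ℤ) = σ ^ 2 * y * U (n - 1) x - T n x)
    (a c : ℤ)
    (ha : 2 * a = T n x - (σ ^ 2 - δ ^ 2) * y * U (n - 1) x + 1)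
    (hc : 2 * c = σ * δ * y * U (n - 1) x * (σ ^ 2 * y * U (n - 1) x - T n x)) :
    S M a = c ^ 2 := by
  have hCheb : T n x ^ 2 - (x ^ 2 - 1) * U (n - 1) x ^ 2 = 1 := by
    simpa [T, U] using congrArg (Polynomial.eval x) (Polynomial.Chebyshev.T_sq_sub_mul_U_sq ℤ n)
  have hPell' : T n x ^ 2 - (σ ^ 4 - δ ^ 4) * (y * U (n - 1) x) ^ 2 = 1 := by
    linear_combination hCheb + U (n - 1) x ^ 2 * hPell
  exact S_eq_sq_of_pell hPell' (by rw [hM]; ring) (by rw [ha]; ring) (by rw [hc, ← hM]; ring)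

/-- The solution family arising from the fundamental solution `(X₁,Y₁) = (σ²,−1)`:
with `D = σ⁴ − δ⁴`, `(x,y)` a positive solution of `x² − Dy² = 1`, `n` a positive
integer, `M = σ²·y·U_{n−1}(x) − T_n(x)` a positive integer,
`2a = T_n(x) − (σ²−δ²)·y·U_{n−1}(x) + 1` and
`2c = σδ·y·U_{n−1}(x)·(σ²·y·U_{n−1}(x) − T_n(x))`, one has `S(M,a) = c²`. -/
theorem solutions_from_sigma_sq_neg_one (δ σ x y : ℤ)
    (hδ : 0 < δ) (hσ : 0 < σ) (hgcd : Int.gcd δ σ = 1) (hlt : δ < σ)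
    (hx : 0 < x) (hy : 0 < y)
    (hPell : x ^ 2 - (σ ^ 4 - δ ^ 4) * y ^ 2 = 1)
    (n : ℤ) (hn : 0 < n)
    (M : ℕ) (hMpos : 0 < M) (hM : (M : ℤ) = σ ^ 2 * y * U (n - 1) x - T n x)
    (a c : ℤ) (hapos : 0 < a) (hcpos : 0 < c)
    (ha : 2 * a = T n x - (σ ^ 2 - δ ^ 2) * y * U (n - 1) x + 1)
    (hc : 2 * c = σ * δ * y * U (n - 1) x * (σ ^ 2 * y * U (n - 1) x - T n x)) :
    S M a = c ^ 2 :=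
  solutions_from_sigma_sq_neg_one_general δ σ x y hPell n M hM a c ha hc
end

section
/- Let δ, σ be positive integers with gcd(δ,σ) = 1 and δ < σ, set D = σ⁴ − δ⁴, let x, y be integers with x² − D·y² = 1, and let X₁, Y₁ be integers with X₁² − D·Y₁² = δ⁴. For an integer n define the rational number c_n = (σ/(2δ³))·( X₁·y·U_{n−1}(x) + Y₁·T_n(x) )·( (σ²X₁ + (σ⁴−δ⁴)Y₁)·y·U_{n−1}(x) + (X₁ + σ²Y₁)·T_n(x) ). Then for every integer n the recurrence c_n = 2(2x² − 1)·c_{n−1} − c_{n−2} + δ·σ³·y² holds. -/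
/-!
Both factors of `c_n` are linear combinations of `T_n(x)` and `y·U_{n-1}(x)`, hence satisfy the
Chebyshev recurrence `s_{n+1} = 2x·s_n − s_{n-1}`. For two such sequences `u, v` the bilinear form
`u_{n+1}v_{n+1} + u_n v_n − x(u_{n+1}v_n + u_n v_{n+1})` does not depend on `n`, and the product
`w_n = u_n v_n` satisfies `w_n = 2(2x² − 1)w_{n-1} − w_{n-2} + 2·(that form)`. Evaluated at `n = 0`
the form is `σ²y²(X₁² − D·Y₁²) = σ²δ⁴y²`, using `x² − 1 = D·y²`.
-/

section

variable {R : Type*} [CommRing R]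

def IsChebyshevSeq (x : R) (u : ℤ → R) : Prop := ∀ n, u (n + 2) = 2 * x * u (n + 1) - u n

def chebyshevForm (x : R) (u v : ℤ → R) (n : ℤ) : R :=
  u (n + 1) * v (n + 1) + u n * v n - x * (u (n + 1) * v n + u n * v (n + 1))

namespace IsChebyshevSeq

variable {x : R} {u v : ℤ → R}

theorem linear_comb (hu : IsChebyshevSeq x u) (hv : IsChebyshevSeq x v) (a b : R) :
    IsChebyshevSeq x (fun n => a * u n + b * v n) := fun n => by
  simp only [hu n, hv n]
  ring

theorem comp_sub (hu : IsChebyshevSeq x u) (k : ℤ) :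
    IsChebyshevSeq x (fun n => u (n - k)) := fun n => by
  simpa only [sub_add_eq_add_sub] using hu (n - k)

theorem chebyshevForm_add_one (hu : IsChebyshevSeq x u) (hv : IsChebyshevSeq x v) (n : ℤ) :
    chebyshevForm x u v (n + 1) = chebyshevForm x u v n := by
  simp only [chebyshevForm, add_assoc, one_add_one_eq_two, hu n, hv n]
  ring

theorem chebyshevForm_eq_chebyshevForm_zero (hu : IsChebyshevSeq x u) (hv : IsChebyshevSeq x v)
    (n : ℤ) :
    chebyshevForm x u v n = chebyshevForm x u v 0 := by
  induction n using Int.induction_on with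
  | zero => rfl
  | succ k ih => rw [hu.chebyshevForm_add_one hv, ih]
  | pred k ih => rw [← ih, ← hu.chebyshevForm_add_one hv, sub_add_cancel]

theorem mul_eq (hu : IsChebyshevSeq x u) (hv : IsChebyshevSeq x v) (n : ℤ) :
    u n * v n = 2 * (2 * x ^ 2 - 1) * (u (n - 1) * v (n - 1)) - u (n - 2) * v (n - 2)
      + 2 * chebyshevForm x u v 0 := by
  obtain ⟨m, rfl⟩ : ∃ m, n = m + 2 := ⟨n - 2, by ring⟩
  rw [← hu.chebyshevForm_eq_chebyshevForm_zero hv m, show m + 2 - 1 = m + 1 by ring,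
    add_sub_cancel_right, hu m, hv m, chebyshevForm]
  ring

end IsChebyshevSeq

end

theorem isChebyshevSeq_T (x : ℤ) : IsChebyshevSeq (x : ℚ) (fun n => (T n x : ℚ)) := fun n => by
  simp only [T, Polynomial.Chebyshev.T_add_two, Polynomial.eval_sub, Polynomial.eval_mul,
    Polynomial.eval_X, Polynomial.eval_ofNat]
  push_cast
  ring

theorem isChebyshevSeq_U (x : ℤ) : IsChebyshevSeq (x : ℚ) (fun n => (U n x : ℚ)) := fun n => by
  simp only [U, Polynomial.Chebyshev.U_add_two, Polynomial.eval_sub, Polynomial.eval_mul,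
    Polynomial.eval_X, Polynomial.eval_ofNat]
  push_cast
  ring

theorem c_recurrence_general (δ σ : ℤ) (hδ : 0 < δ) (x y : ℤ) (hPell : x ^ 2 - (σ ^ 4 - δ ^ 4) * y ^ 2 = 1)
    (X₁ Y₁ : ℤ) (hXY : X₁ ^ 2 - (σ ^ 4 - δ ^ 4) * Y₁ ^ 2 = δ ^ 4)
    (cf : ℤ → ℚ)
    (hcf : ∀ n : ℤ, cf n = ((σ : ℚ) / (2 * (δ : ℚ) ^ 3))
        * ((X₁ : ℚ) * y * U (n - 1) x + Y₁ * T n x)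
        * (((σ : ℚ) ^ 2 * X₁ + ((σ : ℚ) ^ 4 - δ ^ 4) * Y₁) * y * U (n - 1) x
            + ((X₁ : ℚ) + (σ : ℚ) ^ 2 * Y₁) * T n x)) :
    ∀ n : ℤ, cf n = 2 * (2 * (x : ℚ) ^ 2 - 1) * cf (n - 1) - cf (n - 2)
      + (δ : ℚ) * σ ^ 3 * y ^ 2 := by
  have hU := (isChebyshevSeq_U x).comp_sub 1
  have hT := isChebyshevSeq_T x
  let A : ℤ → ℚ := fun n => X₁ * y * U (n - 1) x + Y₁ * T n x
  let B : ℤ → ℚ := fun n => ((σ : ℚ) ^ 2 * X₁ + ((σ : ℚ) ^ 4 - δ ^ 4) * Y₁) * y * U (n - 1) x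
    + ((X₁ : ℚ) + (σ : ℚ) ^ 2 * Y₁) * T n x
  have hA : IsChebyshevSeq (x : ℚ) A := hU.linear_comb hT _ _
  have hB : IsChebyshevSeq (x : ℚ) B := hU.linear_comb hT _ _
  have hcfAB (n : ℤ) : cf n = (σ : ℚ) / (2 * (δ : ℚ) ^ 3) * (A n * B n) := by
    rw [hcf, mul_assoc]
  have hform : chebyshevForm (x : ℚ) A B 0 = (σ : ℚ) ^ 2 * δ ^ 4 * y ^ 2 := by
    have hPell' : (x : ℚ) ^ 2 - ((σ : ℚ) ^ 4 - δ ^ 4) * y ^ 2 = 1 := by exact_mod_cast hPell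
    have hXY' : (X₁ : ℚ) ^ 2 - ((σ : ℚ) ^ 4 - δ ^ 4) * Y₁ ^ 2 = δ ^ 4 := by exact_mod_cast hXY
    simp only [chebyshevForm, A, B, T, U, zero_add, sub_self, zero_sub, Int.reduceNeg,
      Polynomial.Chebyshev.T_zero, Polynomial.Chebyshev.T_one, Polynomial.Chebyshev.U_zero,
      Polynomial.Chebyshev.U_neg_one, Polynomial.eval_one, Polynomial.eval_X, Polynomial.eval_zero,
      Int.cast_one, Int.cast_zero, mul_one, mul_zero]
    linear_combination (σ : ℚ) ^ 2 * y ^ 2 * hXY' - Y₁ * (X₁ + σ ^ 2 * Y₁) * hPell'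
  have hδ' : (δ : ℚ) ≠ 0 := by exact_mod_cast hδ.ne'
  intro n
  rw [hcfAB, hcfAB, hcfAB, hA.mul_eq hB, hform]
  field_simp

/-- The sequence `cₙ` (regarded as rationals) satisfies the recurrence
`cₙ = 2(2x² − 1)·cₙ₋₁ − cₙ₋₂ + δσ³y²`. -/
theorem c_recurrence (δ σ : ℤ) (hδ : 0 < δ) (hσ : 0 < σ) (hgcd : Int.gcd δ σ = 1)
    (hlt : δ < σ) (x y : ℤ) (hPell : x ^ 2 - (σ ^ 4 - δ ^ 4) * y ^ 2 = 1)
    (X₁ Y₁ : ℤ) (hXY : X₁ ^ 2 - (σ ^ 4 - δ ^ 4) * Y₁ ^ 2 = δ ^ 4)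
    (cf : ℤ → ℚ)
    (hcf : ∀ n : ℤ, cf n = ((σ : ℚ) / (2 * (δ : ℚ) ^ 3))
        * ((X₁ : ℚ) * y * U (n - 1) x + Y₁ * T n x)
        * (((σ : ℚ) ^ 2 * X₁ + ((σ : ℚ) ^ 4 - δ ^ 4) * Y₁) * y * U (n - 1) x
            + ((X₁ : ℚ) + (σ : ℚ) ^ 2 * Y₁) * T n x)) :
    ∀ n : ℤ, cf n = 2 * (2 * (x : ℚ) ^ 2 - 1) * cf (n - 1) - cf (n - 2)
      + (δ : ℚ) * σ ^ 3 * y ^ 2 :=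
  c_recurrence_general δ σ hδ x y hPell X₁ Y₁ hXY cf hcf
end
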